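/- arXiv:1905.07699 — 4 statements merged into one kernel-verified Lean document; each statement's English description precedes it below -/
import Mathlib

section
/- (Combinatorial core of the Tree Distance Lemma.) Let N ≥ 1, identify the vertices of the N-dimensional hypercube with functions Fin N → Bool, and let T : (Fin N → Bool) → ℕ be any function. Fix a vertex u and an integer k with 1 ≤ k ≤ N. If the number of vertices x satisfying T(x) ≤ 2^k is strictly greater than 2^(k−1), then there exists a vertex v such that d_Tree(u,v) ≥ ⌈log₂ T(v)⌉ (where ⌈log₂ m⌉ denotes Nat.clog 2 m). -/
/-- The length of the longest common prefix of two vertices of the `N`-dimensional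
hypercube: the largest `j ≤ N` such that `u i = v i` for all `i < j`. -/
def lcp {N : ℕ} (u v : Fin N → Bool) : ℕ :=
  Nat.findGreatest (fun j => ∀ i : Fin N, (i : ℕ) < j → u i = v i) N

/-- The tree distance between two vertices of the hypercube. -/
def treeDist {N : ℕ} (u v : Fin N → Bool) : ℕ := N - lcp u v

/-!
Suppose every vertex `v` had `treeDist u v < ⌈log₂ T v⌉`. Then every `x` with `T x ≤ 2^k`
lies within tree distance `k - 1` of `u`, i.e. agrees with `u` on its first `N - k + 1`
coordinates; but there are only `2^(k-1)` such vertices.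
-/

open Finset

section

variable {N : ℕ}

theorem eq_of_lt_lcp (u v : Fin N → Bool) (i : Fin N) (hi : (i : ℕ) < lcp u v) : u i = v i :=
  Nat.findGreatest_spec (P := fun j => ∀ i : Fin N, (i : ℕ) < j → u i = v i)
    (Nat.zero_le N) (fun _ hi => absurd hi (Nat.not_lt_zero _)) i hi

theorem card_agree_prefix_le (u : Fin N → Bool) (m : ℕ) :
    #{x : Fin N → Bool | ∀ i : Fin N, (i : ℕ) < m → x i = u i} ≤ 2 ^ (N - m) := by
  let suffix (x : Fin N → Bool) (j : Fin (N - m)) : Bool := x ⟨m + j, by omega⟩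
  have suffix_injOn : Set.InjOn suffix {x | ∀ i : Fin N, (i : ℕ) < m → x i = u i} := by
    intro x hx y hy hxy
    funext i
    by_cases hi : (i : ℕ) < m
    · rw [hx i hi, hy i hi]
    · have := congrFun hxy ⟨i - m, by omega⟩
      simpa only [suffix, Nat.add_sub_cancel' (not_lt.mp hi)] using this
  simpa using card_le_card_of_injOn suffix (fun _ _ => mem_univ _)
    (by simpa only [coe_filter, mem_univ, true_and] using suffix_injOn)

theorem card_treeDist_lt_le (u : Fin N → Bool) (k : ℕ) :
    #{x | treeDist u x < k} ≤ 2 ^ (k - 1) := by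
  have ball_subset : univ.filter (fun x => treeDist u x < k) ⊆
      univ.filter (fun x : Fin N → Bool => ∀ i : Fin N, (i : ℕ) < N + 1 - k → x i = u i) :=
    monotone_filter_right _ fun x _ hx i hi =>
      (eq_of_lt_lcp u x i (by unfold treeDist at hx; omega)).symm
  calc #{x | treeDist u x < k}
      ≤ 2 ^ (N - (N + 1 - k)) := (card_le_card ball_subset).trans (card_agree_prefix_le u _)
    _ ≤ 2 ^ (k - 1) := Nat.pow_le_pow_right two_pos (by omega)

end

theorem stmt_2_general (N : ℕ) (T : (Fin N → Bool) → ℕ) (u : Fin N → Bool)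
    (k : ℕ)
    (hcard : 2 ^ (k - 1) < (Finset.univ.filter (fun x : Fin N → Bool => T x ≤ 2 ^ k)).card) :
    ∃ v : Fin N → Bool, Nat.clog 2 (T v) ≤ treeDist u v := by
  by_contra! h
  have close_to_u : univ.filter (fun x => T x ≤ 2 ^ k) ⊆ univ.filter (treeDist u · < k) :=
    monotone_filter_right _ fun x _ hx =>
      (h x).trans_le ((Nat.clog_le_iff_le_pow one_lt_two).mpr hx)
  exact (card_le_card close_to_u |>.trans (card_treeDist_lt_le u k)).not_gt hcard

theorem stmt_2 (N : ℕ) (hN : 1 ≤ N) (T : (Fin N → Bool) → ℕ) (u : Fin N → Bool)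
    (k : ℕ) (hk1 : 1 ≤ k) (hkN : k ≤ N)
    (hcard : 2 ^ (k - 1) < (Finset.univ.filter (fun x : Fin N → Bool => T x ≤ 2 ^ k)).card) :
    ∃ v : Fin N → Bool, Nat.clog 2 (T v) ≤ treeDist u v :=
  stmt_2_general N T u k hcard
end

section
/- For all natural numbers N and k with 2k ≤ N, the partial sum of binomial coefficients satisfies ∑_{i=0}^{k} (N choose i) ≤ (N choose k) · (N − (k−1)) / (N − (2k−1)), where the right-hand side is computed over the real numbers (note N − (2k−1) = N − 2k + 1 ≥ 1 under the hypothesis). -/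
/-! For `i < k ≤ N` the ratio `C(N, i) / C(N, i + 1) = (i + 1) / (N - i)` is at most
`r = k / (N - k + 1)`, which is `< 1` when `2k ≤ N`. Reading the sum downwards from `C(N, k)`
it is therefore dominated by a geometric series, giving `C(N, k) / (1 - r)`, the stated bound. -/

open Finset

theorem sum_range_succ_le_div_one_sub {α : Type*} [Field α] [LinearOrder α] [IsStrictOrderedRing α]
    {a : ℕ → α} {r : α} {k : ℕ} (hr0 : 0 ≤ r) (hr1 : r < 1) (ha0 : 0 ≤ a 0)
    (h : ∀ i < k, a i ≤ r * a (i + 1)) :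
    ∑ i ∈ range (k + 1), a i ≤ a k / (1 - r) := by
  have hpos : 0 < 1 - r := sub_pos.mpr hr1
  induction k with
  | zero =>
    rw [sum_range_one, le_div_iff₀ hpos]
    nlinarith
  | succ k ih =>
    have hstep := h k k.lt_succ_self
    rw [sum_range_succ]
    calc ∑ i ∈ range (k + 1), a i + a (k + 1)
        ≤ a k / (1 - r) + a (k + 1) := by
          gcongr
          exact ih fun i hi => h i (hi.trans k.lt_succ_self)
      _ ≤ r * a (k + 1) / (1 - r) + a (k + 1) := by gcongr
      _ = a (k + 1) / (1 - r) := by field_simp; ring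

theorem Nat.choose_le_div_mul_choose_succ {N k i : ℕ} (hk : k ≤ N) (hi : i < k) :
    (N.choose i : ℝ) ≤ k / (N - k + 1) * N.choose (i + 1) := by
  have hden : (0 : ℝ) < N - k + 1 := by
    have : (k : ℝ) ≤ N := by exact_mod_cast hk
    linarith
  have hiN : i ≤ N := by omega
  have hsucc : (N.choose (i + 1) : ℝ) * (i + 1) = N.choose i * (N - i) := by
    have := Nat.choose_succ_right_eq N i
    rw [← Nat.cast_sub hiN]
    exact_mod_cast this
  have hik : (i : ℝ) + 1 ≤ k := by exact_mod_cast hi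
  rw [div_mul_eq_mul_div, le_div_iff₀ hden]
  -- `k (N - i) - (i + 1) (N - k + 1) = (k - i - 1) (N + 1)`
  nlinarith [(N.choose i).cast_nonneg (α := ℝ), (N.choose (i + 1)).cast_nonneg (α := ℝ)]

theorem stmt_4 (N k : ℕ) (h : 2 * k ≤ N) :
    (∑ i ∈ Finset.range (k + 1), (N.choose i : ℝ)) ≤
      (N.choose k : ℝ) * ((N : ℝ) - ((k : ℝ) - 1)) / ((N : ℝ) - (2 * (k : ℝ) - 1)) := by
  have hkN : (2 * k : ℝ) ≤ N := by exact_mod_cast h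
  have hden : (0 : ℝ) < N - k + 1 := by linarith
  have hr1 : (k : ℝ) / (N - k + 1) < 1 := by rw [div_lt_one hden]; linarith
  calc ∑ i ∈ range (k + 1), (N.choose i : ℝ)
      ≤ N.choose k / (1 - k / (N - k + 1)) :=
        sum_range_succ_le_div_one_sub (by positivity) hr1 (by positivity)
          fun i hi => Nat.choose_le_div_mul_choose_succ (by omega) hi
    _ = _ := by
        have : (0 : ℝ) < N - (2 * k - 1) := by linarith
        field_simp
        ring
end

section
/- For all natural numbers N and k with 1 ≤ k and 4k ≤ N, the partial sum of binomial coefficients satisfies ∑_{i=0}^{k} (N choose i) ≤ (3/2) · (N choose k), where the inequality is between real numbers. -/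
/-!
For `i < k` we have `3 (i + 1) ≤ N - i`, so `C(N, i + 1) / C(N, i) = (N - i) / (i + 1) ≥ 3`.
The partial sum is therefore dominated by a geometric series of ratio `1/3` ending at `C(N, k)`,
which is at most `3/2 · C(N, k)`.
-/

open Finset

theorem sum_range_succ_le_of_mul_le_succ {f : ℕ → ℝ} {r : ℝ} {k : ℕ} (hr : 1 < r)
    (hf0 : 0 ≤ f 0) (hf : ∀ i < k, r * f i ≤ f (i + 1)) :
    ∑ i ∈ range (k + 1), f i ≤ r / (r - 1) * f k := by
  have hr1 : 0 < r - 1 := sub_pos.mpr hr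
  induction k with
  | zero =>
    rw [sum_range_one]
    exact le_mul_of_one_le_left hf0 ((one_le_div hr1).mpr (by linarith))
  | succ k ih =>
    have hsum := ih fun i hi => hf i (by omega)
    have hstep : r / (r - 1) * f k ≤ f (k + 1) / (r - 1) := by
      rw [div_mul_eq_mul_div]
      exact div_le_div_of_nonneg_right (hf k k.lt_succ_self) hr1.le
    calc ∑ i ∈ range (k + 1 + 1), f i
        = ∑ i ∈ range (k + 1), f i + f (k + 1) := sum_range_succ _ _
      _ ≤ f (k + 1) / (r - 1) + f (k + 1) := by linarith
      _ = r / (r - 1) * f (k + 1) := by field_simp; ring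

theorem Nat.mul_choose_le_choose_succ {N i r : ℕ} (h : r * (i + 1) ≤ N - i) :
    r * N.choose i ≤ N.choose (i + 1) := by
  refine Nat.le_of_mul_le_mul_right ?_ i.succ_pos
  calc r * N.choose i * (i + 1) = N.choose i * (r * (i + 1)) := by ring
    _ ≤ N.choose i * (N - i) := Nat.mul_le_mul_left _ h
    _ = N.choose (i + 1) * (i + 1) := (N.choose_succ_right_eq i).symm

theorem stmt_5_general (N k : ℕ) (h : 4 * k ≤ N) :
    (∑ i ∈ Finset.range (k + 1), (N.choose i : ℝ)) ≤ (3 / 2) * (N.choose k : ℝ) := by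
  have hgrowth : ∀ i < k, (3 : ℝ) * N.choose i ≤ N.choose (i + 1) := fun i hi => by
    exact_mod_cast Nat.mul_choose_le_choose_succ (by omega)
  have hsum := sum_range_succ_le_of_mul_le_succ (f := fun i => (N.choose i : ℝ)) (r := 3)
    (by norm_num) (Nat.cast_nonneg _) hgrowth
  norm_num at hsum
  exact hsum

theorem stmt_5 (N k : ℕ) (hk1 : 1 ≤ k) (h : 4 * k ≤ N) :
    (∑ i ∈ Finset.range (k + 1), (N.choose i : ℝ)) ≤ (3 / 2) * (N.choose k : ℝ) :=
  stmt_5_general N k h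
end

section
/- (Combinatorial core of the Working Set Lemma.) Let N ≥ 1, identify the vertices of the N-dimensional hypercube with functions Fin N → Bool, let u be a vertex, let m ≥ 1 be a natural number, and let S be a finite set of vertices with |S| ≥ 2^m. Then there exists a vertex v ∈ S whose Hamming distance from u satisfies hammingDist(u,v) ≥ m / (6 + log₂ N), where log₂ denotes the real base-2 logarithm. -/
/-!
If every vertex of `S` were at distance less than `m / (6 + log₂ N)` from `u`, then `S` would lie
in the Hamming ball of some radius `r` with `(1 + log₂ N) r < m`. That ball has at most
`∑_{i ≤ r} C(N, i) ≤ (N + 1) ^ r ≤ 2 ^ ((1 + log₂ N) r) < 2 ^ m` points, contradicting `2 ^ m ≤ |S|`.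
-/

open Finset

theorem Bool.eq_of_ne_iff_ne {a b c : Bool} (h : a ≠ b ↔ a ≠ c) : b = c := by
  cases a <;> cases b <;> cases c <;> simp_all

theorem card_le_sum_choose_of_hammingDist_le {ι : Type*} [Fintype ι] [DecidableEq ι]
    (u : ι → Bool) (r : ℕ) (S : Finset (ι → Bool)) (hS : ∀ v ∈ S, hammingDist u v ≤ r) :
    #S ≤ ∑ i ∈ range (r + 1), (Fintype.card ι).choose i := by
  -- a vertex is determined by the set of coordinates where it differs from `u`
  have hinj : Set.InjOn (fun v : ι → Bool => ({i | u i ≠ v i} : Finset ι)) S :=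
    fun v _ w _ h => funext fun i => Bool.eq_of_ne_iff_ne (by simpa using Finset.ext_iff.mp h i)
  calc #S ≤ #((range (r + 1)).biUnion fun i => powersetCard i (univ : Finset ι)) := by
        refine card_le_card_of_injOn _ (fun v hv => ?_) hinj
        simp only [coe_biUnion, coe_range, Set.mem_Iio, mem_coe, Set.mem_iUnion, mem_powersetCard]
        exact ⟨hammingDist u v, Nat.lt_succ_of_le (hS v hv), subset_univ _, rfl⟩
    _ ≤ ∑ i ∈ range (r + 1), #(powersetCard i (univ : Finset ι)) := card_biUnion_le
    _ = ∑ i ∈ range (r + 1), (Fintype.card ι).choose i := by simp only [card_powersetCard, card_univ]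

theorem sum_range_choose_le_succ_pow (n r : ℕ) :
    ∑ i ∈ range (r + 1), n.choose i ≤ (n + 1) ^ r := by
  rw [add_pow]
  refine sum_le_sum fun i hi => ?_
  rw [one_pow, mul_one]
  exact (Nat.choose_le_pow n i).trans
    (Nat.le_mul_of_pos_right _ (Nat.choose_pos (Nat.lt_succ_iff.mp (mem_range.mp hi))))

theorem natCast_succ_le_two_rpow_one_add_logb (N : ℕ) :
    ((N + 1 : ℕ) : ℝ) ≤ 2 ^ (1 + Real.logb 2 N) := by
  rcases N.eq_zero_or_pos with rfl | hN
  · norm_num -- `Real.logb 2 0 = 0`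
  · rw [Real.rpow_add two_pos, Real.rpow_one, Real.rpow_logb two_pos (by norm_num) (by positivity)]
    push_cast
    linarith [(Nat.one_le_cast (α := ℝ)).mpr hN]

theorem succ_pow_lt_two_pow {N r m : ℕ} (h : (1 + Real.logb 2 N) * r < m) :
    (N + 1) ^ r < 2 ^ m := by
  have hN : (0 : ℝ) ≤ (N + 1 : ℕ) := Nat.cast_nonneg _
  suffices ((N + 1 : ℕ) : ℝ) ^ (r : ℝ) < (2 : ℝ) ^ (m : ℝ) by exact_mod_cast this
  calc ((N + 1 : ℕ) : ℝ) ^ (r : ℝ) ≤ ((2 : ℝ) ^ (1 + Real.logb 2 N)) ^ (r : ℝ) :=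
        Real.rpow_le_rpow hN (natCast_succ_le_two_rpow_one_add_logb N) r.cast_nonneg
    _ = 2 ^ ((1 + Real.logb 2 N) * r) := (Real.rpow_mul zero_le_two _ _).symm
    _ < 2 ^ (m : ℝ) := Real.rpow_lt_rpow_of_exponent_lt one_lt_two h

theorem stmt_11_general (N : ℕ) (u : Fin N → Bool) (m : ℕ)
    (S : Finset (Fin N → Bool)) (hS : 2 ^ m ≤ S.card) :
    ∃ v ∈ S, (m : ℝ) / (6 + Real.logb 2 N) ≤ (hammingDist u v : ℝ) := by
  by_contra! hfar
  set L := Real.logb 2 N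
  have hL : 0 ≤ L := div_nonneg (Real.log_natCast_nonneg N) (Real.log_nonneg one_le_two)
  obtain ⟨v₀, hv₀⟩ : S.Nonempty := card_pos.mp (lt_of_lt_of_le (Nat.two_pow_pos m) hS)
  have hm : (0 : ℝ) < m := (div_pos_iff_of_pos_right (by linarith)).mp
    ((hammingDist u v₀).cast_nonneg.trans_lt (hfar v₀ hv₀))
  set r := ⌊(m : ℝ) / (6 + L)⌋₊
  have hr : (r : ℝ) * (6 + L) ≤ m :=
    (le_div_iff₀ (by linarith)).mp (Nat.floor_le (by positivity))
  have hexp : (1 + L) * r < m := by nlinarith [r.cast_nonneg (α := ℝ)]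
  have hball : ∀ v ∈ S, hammingDist u v ≤ r := fun v hv => Nat.le_floor (hfar v hv).le
  have hcard : 2 ^ m ≤ (N + 1) ^ r := calc
    2 ^ m ≤ #S := hS
    _ ≤ ∑ i ∈ range (r + 1), N.choose i := by
      simpa only [Fintype.card_fin] using card_le_sum_choose_of_hammingDist_le u r S hball
    _ ≤ (N + 1) ^ r := sum_range_choose_le_succ_pow N r
  exact (succ_pow_lt_two_pow hexp).not_ge hcard

theorem stmt_11 (N : ℕ) (hN : 1 ≤ N) (u : Fin N → Bool) (m : ℕ) (hm : 1 ≤ m)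
    (S : Finset (Fin N → Bool)) (hS : 2 ^ m ≤ S.card) :
    ∃ v ∈ S, (m : ℝ) / (6 + Real.logb 2 N) ≤ (hammingDist u v : ℝ) :=
  stmt_11_general N u m S hS
end
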